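/- Let π be a connected decorated permutation of [n] with associated connected Grassmann necklace I, and let J be the connected Grassmann necklace associated to the connected decorated permutation π^{-1}. Then the exchange graphs G^I and G^J are isomorphic as simple graphs. -/

import Mathlib

open SimpleGraph

namespace WS

/-- Integers (elements of the cyclically ordered set `[n]`, identified with `Fin n`)
are *cyclically ordered* if some rotation of the list is strictly increasing. -/
def CyclicallyOrdered {n : ℕ} (l : List (Fin n)) : Prop :=
  ∃ k : ℕ, (l.rotate k).Pairwise (· < ·)

/-- Two subsets of `[n]` are *weakly separated*. -/
def WeaklySeparated {n : ℕ} (A B : Finset (Fin n)) : Prop :=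
  ¬ ∃ a b a' b' : Fin n, CyclicallyOrdered [a, b, a', b'] ∧
      a ∈ A \ B ∧ a' ∈ A \ B ∧ b ∈ B \ A ∧ b' ∈ B \ A

/-- The cyclic successor `i + 1` in `[n]`. -/
def cnext {n : ℕ} (i : Fin n) : Fin n := i + ⟨1 % n, Nat.mod_lt 1 i.pos⟩

/-- A (connected) Grassmann necklace. -/
def IsGrassmannNecklace {n : ℕ} (N : Fin n → Finset (Fin n)) : Prop :=
  (∀ i j : Fin n, (N i).card = (N j).card) ∧
    (∀ i : Fin n, cnext i ∈ N (cnext i)) ∧ ∀ i : Fin n, N i \ {i} ⊆ N (cnext i)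

/-- The linear order `<ᵢ` on `[n]` starting at `i`. -/
def cyclicLT {n : ℕ} (i a b : Fin n) : Prop := (a - i).val < (b - i).val

instance {n : ℕ} (i a b : Fin n) : Decidable (cyclicLT i a b) :=
  inferInstanceAs (Decidable ((a - i).val < (b - i).val))

/-- The Gale order `≤ᵢ` : comparing the sorted lists elementwise w.r.t. `≤ᵢ`. -/
def FinsetLE {n : ℕ} (i : Fin n) (A B : Finset (Fin n)) : Prop :=
  List.Forall₂ (· ≤ ·) (Finset.sort (A.image fun x => x - i) (· ≤ ·))
    (Finset.sort (B.image fun x => x - i) (· ≤ ·))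

/-- The positroid associated to a Grassmann necklace. -/
def positroid {n : ℕ} (N : Fin n → Finset (Fin n)) : Set (Finset (Fin n)) :=
  {J | (∀ i, J.card = (N i).card) ∧ ∀ i, FinsetLE i (N i) J}

/-- A weakly separated collection. -/
def IsWSC {n : ℕ} (W : Finset (Finset (Fin n))) : Prop :=
  ∀ A ∈ W, ∀ B ∈ W, WeaklySeparated A B

/-- A weakly separated collection over a Grassmann necklace. -/
def IsWSCOver {n : ℕ} (N : Fin n → Finset (Fin n)) (W : Finset (Finset (Fin n))) : Prop :=
  IsWSC W ∧ ∀ A ∈ W, A ∈ positroid N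

/-- A maximal weakly separated collection over a Grassmann necklace. -/
def IsMaxWSCOver {n : ℕ} (N : Fin n → Finset (Fin n)) (W : Finset (Finset (Fin n))) : Prop :=
  IsWSCOver N W ∧ ∀ W', IsWSCOver N W' → W ⊆ W' → W' = W

/-- `V ∪ {a, b}`. -/
def pairAdd {n : ℕ} (V : Finset (Fin n)) (a b : Fin n) : Finset (Fin n) :=
  insert a (insert b V)

/-- `V₂` is obtained from `V₁` by a mutation. -/
def Mutation {n : ℕ} (V1 V2 : Finset (Finset (Fin n))) : Prop :=
  ∃ (V : Finset (Fin n)) (a b c d : Fin n),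
    CyclicallyOrdered [a, b, c, d] ∧ a ∉ V ∧ b ∉ V ∧ c ∉ V ∧ d ∉ V ∧
    pairAdd V a b ∈ V1 ∧ pairAdd V b c ∈ V1 ∧ pairAdd V c d ∈ V1 ∧
    pairAdd V d a ∈ V1 ∧ pairAdd V a c ∈ V1 ∧
    V2 = insert (pairAdd V b d) (V1.erase (pairAdd V a c))

/-- The type of maximal weakly separated collections over `N`. -/
abbrev MWSC {n : ℕ} (N : Fin n → Finset (Fin n)) : Type :=
  {W : Finset (Finset (Fin n)) // IsMaxWSCOver N W}

/-- The exchange graph of a Grassmann necklace. -/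
def exchangeGraph {n : ℕ} (N : Fin n → Finset (Fin n)) : SimpleGraph (MWSC N) :=
  SimpleGraph.fromRel fun V1 V2 => Mutation V1.1 V2.1

/-- The type of maximal weakly separated collections over `N` containing `C`. -/
abbrev CMWSC {n : ℕ} (N : Fin n → Finset (Fin n)) (C : Finset (Finset (Fin n))) : Type :=
  {W : Finset (Finset (Fin n)) // IsMaxWSCOver N W ∧ C ⊆ W}

/-- The `C`-constant graph `G^I(C)` : the induced subgraph of the exchange graph
on the maximal weakly separated collections containing `C`. -/
def constantGraph {n : ℕ} (N : Fin n → Finset (Fin n)) (C : Finset (Finset (Fin n))) :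
    SimpleGraph (CMWSC N C) :=
  SimpleGraph.fromRel fun V1 V2 => Mutation V1.1 V2.1

/-- The set of distinct subsets appearing in the necklace. -/
def necklaceSet {n : ℕ} (N : Fin n → Finset (Fin n)) : Finset (Finset (Fin n)) :=
  Finset.univ.image N

/-- The necklace `N` has interior size `c`. -/
def HasInteriorSize {n : ℕ} (N : Fin n → Finset (Fin n)) (c : ℕ) : Prop :=
  ∀ W, IsMaxWSCOver N W → W.card = (necklaceSet N).card + c

/-- The `C`-constant graph `G^I(C)` has co-dimension `c`. -/
def HasCodim {n : ℕ} (N : Fin n → Finset (Fin n)) (C : Finset (Finset (Fin n))) (c : ℕ) :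
    Prop :=
  ∀ W, IsMaxWSCOver N W → W.card = C.card + c

/-- Two `k`-element subsets are quasi-adjacent if their intersection has `k - 1` elements. -/
def QuasiAdjacent {n : ℕ} (A B : Finset (Fin n)) : Prop :=
  A.card = B.card ∧ (A ∩ B).card + 1 = A.card

/-- The `C`-constant graph `G^I(C)` is applicable. -/
def Applicable {n : ℕ} (N : Fin n → Finset (Fin n)) (C : Finset (Finset (Fin n))) : Prop :=
  ∀ V ∈ C, ∃ l : List (Finset (Fin n)),
    l.head? = some V ∧ (∀ W ∈ l, W ∈ C) ∧ List.Chain' QuasiAdjacent l ∧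
    ∃ W ∈ necklaceSet N, l.getLast? = some W

/-- The necklace `N` is mutation-friendly: the intersection of all maximal weakly separated
collections over `N` is exactly the necklace. -/
def MutationFriendly {n : ℕ} (N : Fin n → Finset (Fin n)) : Prop :=
  ∀ A : Finset (Fin n), (∀ W, IsMaxWSCOver N W → A ∈ W) ↔ A ∈ necklaceSet N

/-- The `C`-constant graph `G^I(C)` is mutation-friendly. -/
def CMutationFriendly {n : ℕ} (N : Fin n → Finset (Fin n)) (C : Finset (Finset (Fin n))) :
    Prop :=
  ∀ A : Finset (Fin n), (∀ W, IsMaxWSCOver N W → C ⊆ W → A ∈ W) ↔ A ∈ C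

/-- The necklace `N` is very-mutation-friendly. -/
def VeryMutationFriendly {n : ℕ} (N : Fin n → Finset (Fin n)) : Prop :=
  MutationFriendly N ∧
    ∀ i : ℕ, HasInteriorSize N i →
      ∃ W : ℕ → Finset (Finset (Fin n)),
        (∀ j, 1 ≤ j → j ≤ i - 1 →
            IsWSCOver N (W j) ∧ necklaceSet N ⊆ W j ∧
            (W j).card + j = i + (necklaceSet N).card ∧
            Applicable N (W j) ∧ CMutationFriendly N (W j)) ∧
        ∀ j, 1 ≤ j → j + 1 ≤ i - 1 → W (j + 1) ⊆ W j

/-- The circular interval `[i, j)` in `[n]`. -/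
def circInterval {n : ℕ} (i j : Fin n) : Finset (Fin n) :=
  Finset.univ.filter fun x => (x - i).val < (j - i).val

/-- A connected decorated permutation. -/
def IsConnectedPerm {n : ℕ} (π : Equiv.Perm (Fin n)) : Prop :=
  ¬ ∃ i j : Fin n, i ≠ j ∧
      (circInterval i j).image (fun x => π x) = circInterval i j ∧
      (circInterval j i).image (fun x => π x) = circInterval j i

/-- The Grassmann necklace associated to a decorated permutation:
`I_i = {j : j <ᵢ π⁻¹(j)}`. -/
def necklaceOfPerm {n : ℕ} (π : Equiv.Perm (Fin n)) : Fin n → Finset (Fin n) :=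
  fun i => Finset.univ.filter fun j => cyclicLT i j (π⁻¹ j)

/-- `π` is the decorated permutation associated to the necklace `N`:
`π(i) = j` whenever `I_{i+1} = (I_i ∖ {i}) ∪ {j}`. -/
def IsDecoratedPermOf {n : ℕ} (π : Equiv.Perm (Fin n)) (N : Fin n → Finset (Fin n)) : Prop :=
  ∀ i : Fin n, N (cnext i) = insert (π i) ((N i).erase i)

/-- The label-reflection operation `LR^{2i}[π](j) = 2i - π⁻¹(2i - j)`. -/
def LRop {n : ℕ} [NeZero n] (i : Fin n) (π : Equiv.Perm (Fin n)) : Equiv.Perm (Fin n) :=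
  ((Equiv.subLeft (i + i)).trans (π⁻¹ : Equiv.Perm (Fin n))).trans
    (Equiv.subLeft (i + i))

/-- The between-label-reflection operation `BLR^{2i-1}[π](j) = (2i-1) - π⁻¹((2i-1) - j)`. -/
def BLRop {n : ℕ} [NeZero n] (i : Fin n) (π : Equiv.Perm (Fin n)) : Equiv.Perm (Fin n) :=
  ((Equiv.subLeft (i + i - 1)).trans (π⁻¹ : Equiv.Perm (Fin n))).trans
    (Equiv.subLeft (i + i - 1))

/-- The rotation operation `R^i[π](j) = π(j - i) + i`. -/
def Rop {n : ℕ} [NeZero n] (i : Fin n) (π : Equiv.Perm (Fin n)) : Equiv.Perm (Fin n) :=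
  ((Equiv.subRight i).trans π).trans (Equiv.addRight i)

/-- One step in generating the equivalence class of decorated permutations. -/
def PermStep {n : ℕ} [NeZero n] (π σ : Equiv.Perm (Fin n)) : Prop :=
  σ = π⁻¹ ∨ (∃ i : Fin n, σ = LRop i π) ∨
    (Even n ∧ ∃ i : Fin n, σ = BLRop i π) ∨ ∃ i : Fin n, σ = Rop i π

/-- Two decorated permutations belong to the same equivalence class. -/
def PermEquiv {n : ℕ} [NeZero n] (π σ : Equiv.Perm (Fin n)) : Prop :=
  Relation.EqvGen PermStep π σ

/-- `σ` is the permutation `π₁ = 312` (on `[3]`, in `Fin 3` coordinates). -/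
def IsStandardPermOne (σ : Equiv.Perm (Fin 3)) : Prop :=
  σ 1 = 0 ∧ σ 2 = 1 ∧ σ 0 = 2

/-- `σ` is the permutation `π_c` on `[2c]` (for `c ≥ 2`), in `Fin (2c)` coordinates,
where the element `a ∈ [2c]` corresponds to `a % 2c : Fin (2c)`. -/
def IsStandardPerm (c : ℕ) (hc : 2 ≤ c) (σ : Equiv.Perm (Fin (2 * c))) : Prop :=
  ∀ a : ℕ, 1 ≤ a → a ≤ 2 * c →
    σ ⟨a % (2 * c), Nat.mod_lt _ (by omega)⟩ =
      ⟨(if a = 1 then 3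
        else if a ≤ c then 2 * c + 1 - a
        else if a = c + 1 then 1
        else if a = c + 2 then 2
        else 2 * c + 3 - a) % (2 * c), Nat.mod_lt _ (by omega)⟩

/-- The decorated permutation `π` (on `[n]`) belongs to the equivalence class `𝒞_c`
of the permutation `π_c`. -/
def InStandardClass (c : ℕ) {n : ℕ} (π : Equiv.Perm (Fin n)) : Prop :=
  (c = 1 ∧ ∃ h : n = 3, ∃ σ : Equiv.Perm (Fin 3),
      IsStandardPermOne σ ∧ PermEquiv ((finCongr h).permCongr π) σ) ∨
    ∃ hc : 2 ≤ c, ∃ h : n = 2 * c, ∃ σ : Equiv.Perm (Fin (2 * c)),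
      IsStandardPerm c hc σ ∧
      @PermEquiv (2 * c) ⟨by omega⟩ ((finCongr h).permCongr π) σ

/-- The embedding of the elements of `[n]` into `[n + m - 2]` used in gluing (the element
`n` of `[n]`, i.e. `0 : Fin n`, is sent to the element `n` of `[n + m - 2]`). -/
def glueEmbed {n m : ℕ} (hn : 3 ≤ n) (hm : 3 ≤ m) (v : Fin n) : Fin (n + m - 2) :=
  if h : v.val = 0 then ⟨n, by omega⟩ else ⟨v.val, by have := v.isLt; omega⟩

/-- The shifted embedding `b ↦ b + n - 2` of the elements of `[m]` into `[n + m - 2]`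
used in gluing (the element `m` of `[m]`, i.e. `0 : Fin m`, is sent to the element
`n + m - 2`, i.e. `0 : Fin (n + m - 2)`). -/
def glueShift {n m : ℕ} (hn : 3 ≤ n) (hm : 3 ≤ m) (v : Fin m) : Fin (n + m - 2) :=
  if h : v.val = 0 then ⟨0, by omega⟩ else ⟨v.val + n - 2, by have := v.isLt; omega⟩

/-- `π₃` is the decorated permutation of the glued Grassmann necklace `I □ J`, where
`π₁, π₂` are the decorated permutations of `I, J`. -/
def IsGluedPerm {n m : ℕ} (hn : 3 ≤ n) (hm : 3 ≤ m)
    (π1 : Equiv.Perm (Fin n)) (π2 : Equiv.Perm (Fin m))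
    (π3 : Equiv.Perm (Fin (n + m - 2))) : Prop :=
  (∀ a : Fin n, a.val ≠ 0 → (π1 a).val ≠ 0 →
      π3 (glueEmbed hn hm a) = glueEmbed hn hm (π1 a)) ∧
  (∀ a : Fin n, a.val ≠ 0 → (π1 a).val = 0 →
      π3 (glueEmbed hn hm a) = glueShift hn hm (π2 ⟨1, by omega⟩)) ∧
  (∀ a : Fin m, (a.val = 0 ∨ 3 ≤ a.val) → π2 a ≠ ⟨1, by omega⟩ →
      π3 (glueShift hn hm a) = glueShift hn hm (π2 a)) ∧
  (∀ a : Fin m, (a.val = 0 ∨ 3 ≤ a.val) → π2 a = ⟨1, by omega⟩ →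
      π3 (glueShift hn hm a) = glueEmbed hn hm (π1 ⟨0, by omega⟩))

/-- The box product of an arbitrary family of simple graphs. -/
def boxProdFamily {ι : Type*} {V : ι → Type*} (G : ∀ i, SimpleGraph (V i)) :
    SimpleGraph (∀ i, V i) where
  Adj v w := ∃ j, (G j).Adj (v j) (w j) ∧ ∀ l, l ≠ j → v l = w l
  symm := by
    constructor
    rintro v w ⟨j, h, hl⟩
    exact ⟨j, (G j).adj_symm h, fun l hlj => (hl l hlj).symm⟩
  loopless := by
    constructor
    rintro v ⟨j, h, -⟩
    exact (G j).irrefl h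

/-!
The isomorphism is complementation `J ↦ [n] ∖ J`, applied to every member of a collection. It
preserves weak separation, since it exchanges `I ∖ J` and `J ∖ I`, and it turns the mutation square
around `V` and `a, b, c, d` into the square around the complement of `V ∪ {a, b, c, d}` with labels
`b, c, d, a`. It remains to see that `J ∈ M_{I(π)}` iff `[n] ∖ J ∈ M_{I(π⁻¹)}`. Written as the
counting inequalities `|B ∩ [i, j)| ≤ |A ∩ [i, j)|`, the Gale inequality for `[n] ∖ J` on `[i, j)`
reduces to the one for `J` on the complementary interval `[j, i)` together with the identity
`|I_j ∩ [j, i)| + |I'_i ∩ [j, i)| = |[j, i)|`, where `I'` is the necklace of `π⁻¹`. The identity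
holds because `π` maps `I'_i ∩ [j, i)` onto `[j, i) ∖ I_j` when `π` has no fixed points, and a
connected permutation of `[n]`, `n ≥ 2`, has none.
-/

end WS

open Finset
open scoped FinsetFamily

theorem List.Forall₂.countP_lt_le {α : Type*} [LinearOrder α] {l₁ l₂ : List α}
    (h : List.Forall₂ (· ≤ ·) l₁ l₂) (a : α) : l₂.countP (· < a) ≤ l₁.countP (· < a) := by
  induction h with
  | nil => simp
  | @cons x y _ _ hxy _ ih =>
    by_cases hya : y < a
    · simpa [List.countP_cons, hya, hxy.trans_lt hya] using ih
    · simp only [List.countP_cons, hya, decide_false, Bool.false_eq_true, if_false]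
      split_ifs <;> omega

theorem List.forall₂_of_countP_lt_le {α : Type*} [LinearOrder α] :
    ∀ {l₁ l₂ : List α}, l₁.Pairwise (· < ·) → l₂.Pairwise (· < ·) → l₁.length = l₂.length →
      (∀ a, l₂.countP (· < a) ≤ l₁.countP (· < a)) → List.Forall₂ (· ≤ ·) l₁ l₂
  | [], [], _, _, _, _ => .nil
  | x :: l₁, y :: l₂, h₁, h₂, hlen, hcount => by
    rw [List.pairwise_cons] at h₁ h₂
    have hxy : x ≤ y := by
      by_contra! hyx
      have h0 : l₁.countP (· < x) = 0 :=
        List.countP_eq_zero.2 fun z hz => by simpa using (h₁.1 z hz).le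
      simpa [List.countP_cons, hyx, h0] using hcount x
    refine .cons hxy (forall₂_of_countP_lt_le h₁.2 h₂.2 (by simpa using hlen) fun a => ?_)
    by_cases hya : y < a
    · simpa [List.countP_cons, hya, hxy.trans_lt hya] using hcount a
    · have h0 : l₂.countP (· < a) = 0 :=
        List.countP_eq_zero.2 fun z hz => by simpa using fun hza => hya ((h₂.1 z hz).trans hza)
      simp [h0]

theorem Finset.countP_sort {α : Type*} [LinearOrder α] (s : Finset α) (p : α → Prop)
    [DecidablePred p] : (s.sort (· ≤ ·)).countP p = #{x ∈ s | p x} := by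
  rw [← (s.sort_nodup _).card_eq_countP, sort_toFinset]

theorem Finset.forall₂_sort_le_iff {α : Type*} [LinearOrder α] (s t : Finset α) :
    List.Forall₂ (· ≤ ·) (s.sort (· ≤ ·)) (t.sort (· ≤ ·)) ↔
      #s = #t ∧ ∀ a, #{x ∈ t | x < a} ≤ #{x ∈ s | x < a} := by
  rw [← s.length_sort (· ≤ ·), ← t.length_sort (· ≤ ·)]
  simp only [← countP_sort]
  exact ⟨fun h => ⟨h.length_eq, h.countP_lt_le⟩, fun h => List.forall₂_of_countP_lt_le
    (s.sortedLT_sort).pairwise (t.sortedLT_sort).pairwise h.1 h.2⟩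

theorem Finset.card_inter_add_card_inter_compl {α : Type*} [Fintype α] [DecidableEq α]
    (s t : Finset α) : #(s ∩ t) + #(s ∩ tᶜ) = #s := by
  rw [← sdiff_eq_inter_compl, card_inter_add_card_sdiff]

theorem Finset.card_inter_add_card_compl_inter {α : Type*} [Fintype α] [DecidableEq α]
    (s t : Finset α) : #(s ∩ t) + #(sᶜ ∩ t) = #t := by
  rw [inter_comm s, inter_comm sᶜ, ← sdiff_eq_inter_compl, card_inter_add_card_sdiff]

theorem Finset.compls_inj {α : Type*} [BooleanAlgebra α] {s t : Finset α} :
    sᶜˢ = tᶜˢ ↔ s = t :=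
  map_inj

namespace WS

variable {n : ℕ}

lemma CyclicallyOrdered.rotate {l : List (Fin n)} (h : CyclicallyOrdered l) (m : ℕ) :
    CyclicallyOrdered (l.rotate m) := by
  obtain ⟨k, hk⟩ := h
  obtain ⟨j, hj⟩ := List.IsRotated.forall l m
  exact ⟨j + k, by rwa [← List.rotate_rotate, hj]⟩

lemma CyclicallyOrdered.nodup {l : List (Fin n)} (h : CyclicallyOrdered l) : l.Nodup := by
  obtain ⟨k, hk⟩ := h
  exact (List.nodup_rotate (n := k)).1 hk.nodup

lemma WeaklySeparated.compl {A B : Finset (Fin n)} (h : WeaklySeparated A B) :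
    WeaklySeparated Aᶜ Bᶜ := by
  rintro ⟨a, b, a', b', hcyc, ha, ha', hb, hb'⟩
  rw [compl_sdiff_compl] at ha ha' hb hb'
  exact h ⟨b, a', b', a, hcyc.rotate 1, hb, hb', ha', ha⟩

lemma weaklySeparated_compl_iff {A B : Finset (Fin n)} :
    WeaklySeparated Aᶜ Bᶜ ↔ WeaklySeparated A B :=
  ⟨fun h => by simpa using h.compl, WeaklySeparated.compl⟩

lemma Mutation.compls {W₁ W₂ : Finset (Finset (Fin n))} (h : Mutation W₁ W₂) :
    Mutation W₁ᶜˢ W₂ᶜˢ := by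
  obtain ⟨V, a, b, c, d, hcyc, ha, hb, hc, hd, hab, hbc, hcd, hda, hac, rfl⟩ := h
  have hnodup := hcyc.nodup
  set U := (pairAdd (pairAdd V a b) c d)ᶜ
  have c1 : (pairAdd V a b)ᶜ = pairAdd U c d := by ext; simp [U, pairAdd]; grind
  have c2 : (pairAdd V b c)ᶜ = pairAdd U d a := by ext; simp [U, pairAdd]; grind
  have c3 : (pairAdd V c d)ᶜ = pairAdd U a b := by ext; simp [U, pairAdd]; grind
  have c4 : (pairAdd V d a)ᶜ = pairAdd U b c := by ext; simp [U, pairAdd]; grind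
  have c5 : (pairAdd V a c)ᶜ = pairAdd U b d := by ext; simp [U, pairAdd]; grind
  have c6 : (pairAdd V b d)ᶜ = pairAdd U c a := by ext; simp [U, pairAdd]; grind
  refine ⟨U, b, c, d, a, hcyc.rotate 1, by simp [U, pairAdd], by simp [U, pairAdd],
    by simp [U, pairAdd], by simp [U, pairAdd], c4 ▸ compl_mem_compls hda,
    c1 ▸ compl_mem_compls hab, c2 ▸ compl_mem_compls hbc, c3 ▸ compl_mem_compls hcd,
    c5 ▸ compl_mem_compls hac, ?_⟩
  simp only [← image_compl, image_insert, image_erase compl_injective, c5, c6]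

lemma mutation_compls_iff {W₁ W₂ : Finset (Finset (Fin n))} :
    Mutation W₁ᶜˢ W₂ᶜˢ ↔ Mutation W₁ W₂ :=
  ⟨fun h => by simpa using h.compls, Mutation.compls⟩

section ComplPositroid

variable {N N' : Fin n → Finset (Fin n)}

lemma isWSCOver_compls_iff (hN : ∀ J, Jᶜ ∈ positroid N' ↔ J ∈ positroid N)
    {W : Finset (Finset (Fin n))} : IsWSCOver N' Wᶜˢ ↔ IsWSCOver N W := by
  simp only [IsWSCOver, IsWSC, forall_mem_compls, weaklySeparated_compl_iff, hN]

lemma isMaxWSCOver_compls_iff (hN : ∀ J, Jᶜ ∈ positroid N' ↔ J ∈ positroid N)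
    {W : Finset (Finset (Fin n))} :
    IsMaxWSCOver N' Wᶜˢ ↔ IsMaxWSCOver N W := by
  rw [IsMaxWSCOver, IsMaxWSCOver, isWSCOver_compls_iff hN]
  refine and_congr_right fun _ => ⟨fun h W' hW' hsub => ?_, fun h W' hW' hsub => ?_⟩
  · exact compls_inj.1 (h W'ᶜˢ ((isWSCOver_compls_iff hN).2 hW') (compls_subset_compls.2 hsub))
  · rw [← compls_compls W'] at hW' hsub ⊢
    rw [h _ ((isWSCOver_compls_iff hN).1 hW') (compls_subset_compls.1 hsub)]

def exchangeGraphComplIso (hN : ∀ J, Jᶜ ∈ positroid N' ↔ J ∈ positroid N) :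
    exchangeGraph N ≃g exchangeGraph N' where
  toFun W := ⟨W.1ᶜˢ, (isMaxWSCOver_compls_iff hN).2 W.2⟩
  invFun W := ⟨W.1ᶜˢ, (isMaxWSCOver_compls_iff hN).1 (by simpa using W.2)⟩
  left_inv W := Subtype.ext (compls_compls _)
  right_inv W := Subtype.ext (compls_compls _)
  map_rel_iff' := by simp [exchangeGraph, mutation_compls_iff, Subtype.ext_iff, compls_inj]

end ComplPositroid

lemma mem_circInterval {i j x : Fin n} : x ∈ circInterval i j ↔ cyclicLT i x j := by
  simp [circInterval, cyclicLT]

section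

variable [NeZero n]

lemma val_sub_add_val_sub (x i j : Fin n) :
    (x - j).val + (j - i).val = (x - i).val ∨ (x - j).val + (j - i).val = (x - i).val + n := by
  have hsum : x - i = (x - j) + (j - i) := by abel
  have hx := (x - j).isLt
  have hj := (j - i).isLt
  rw [hsum, Fin.val_add]
  rcases lt_or_ge ((x - j).val + (j - i).val) n with h | h
  · exact Or.inl (Nat.mod_eq_of_lt h).symm
  · rw [Nat.mod_eq_sub_mod h, Nat.mod_eq_of_lt (by omega)]
    omega

lemma not_cyclicLT_iff {i x y : Fin n} (hxy : x ≠ y) : ¬ cyclicLT i x y ↔ cyclicLT i y x := by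
  have : (x - i).val ≠ (y - i).val := fun h => hxy (sub_left_injective (Fin.val_injective h))
  unfold cyclicLT
  omega

lemma compl_circInterval {i j : Fin n} (hij : i ≠ j) : (circInterval i j)ᶜ = circInterval j i := by
  have hji : (j - i).val ≠ 0 := fun h => hij (sub_eq_zero.1 (Fin.val_injective h)).symm
  ext x
  have := val_sub_add_val_sub x i j
  have := val_sub_add_val_sub i i j
  simp only [mem_compl, mem_circInterval, cyclicLT, sub_self, Fin.val_zero] at *
  have := (x - i).isLt
  have := (x - j).isLt
  omega

lemma cyclicLT_and_mem_circInterval_iff (i j x y : Fin n) :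
    cyclicLT i x y ∧ x ∈ circInterval j i ↔ cyclicLT j x y ∧ y ∈ circInterval j i := by
  have := val_sub_add_val_sub x j i
  have := val_sub_add_val_sub y j i
  have := (x - i).isLt
  have := (y - i).isLt
  have := (x - j).isLt
  have := (y - j).isLt
  simp only [mem_circInterval, cyclicLT]
  omega

lemma card_necklaceOfPerm_add_card_inv {π : Equiv.Perm (Fin n)} (hπ : ∀ x, π x ≠ x) (i : Fin n) :
    #(necklaceOfPerm π i) + #(necklaceOfPerm π⁻¹ i) = n := by
  have h : (necklaceOfPerm π⁻¹ i)ᶜ = (necklaceOfPerm π i).map (π⁻¹).toEmbedding := by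
    ext x
    simp [necklaceOfPerm, Equiv.Perm.inv_def, not_cyclicLT_iff (hπ x).symm]
  rw [← card_map (π⁻¹).toEmbedding, ← h, card_compl_add_card, Fintype.card_fin]

lemma card_necklaceOfPerm_inter_add_card_inv_inter {π : Equiv.Perm (Fin n)} (hπ : ∀ x, π x ≠ x)
    (i j : Fin n) :
    #(necklaceOfPerm π j ∩ circInterval j i) + #(necklaceOfPerm π⁻¹ i ∩ circInterval j i) =
      #(circInterval j i) := by
  have h : (necklaceOfPerm π⁻¹ i ∩ circInterval j i).map π.toEmbedding =
      circInterval j i \ necklaceOfPerm π j := by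
    ext y
    obtain ⟨x, rfl⟩ := π.surjective y
    simp only [necklaceOfPerm, mem_map_equiv, Equiv.Perm.inv_def, mem_inter, mem_sdiff, mem_filter,
      mem_univ, true_and, Equiv.symm_symm, Equiv.symm_apply_apply, not_cyclicLT_iff (hπ x)]
    exact (cyclicLT_and_mem_circInterval_iff i j x (π x)).trans and_comm
  have := card_map (s := necklaceOfPerm π⁻¹ i ∩ circInterval j i) π.toEmbedding
  rw [← this, h, inter_comm, card_inter_add_card_sdiff]

lemma finsetLE_iff (i : Fin n) (A B : Finset (Fin n)) :
    FinsetLE i A B ↔ #A = #B ∧ ∀ j, #(B ∩ circInterval i j) ≤ #(A ∩ circInterval i j) := by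
  have hcard (S : Finset (Fin n)) : #(S.image (· - i)) = #S :=
    card_image_of_injective _ sub_left_injective
  have hfilter (S : Finset (Fin n)) (j : Fin n) :
      #{y ∈ S.image (· - i) | y < j - i} = #(S ∩ circInterval i j) := by
    rw [filter_image, card_image_of_injective _ sub_left_injective]
    congr 1
    ext
    simp [circInterval, and_comm]
  rw [FinsetLE, forall₂_sort_le_iff, hcard, hcard]
  refine and_congr_right fun _ => ⟨fun h j => ?_, fun h a => ?_⟩
  · simpa only [hfilter] using h (j - i)
  · rw [← add_sub_cancel_right a i, hfilter, hfilter]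
    exact h _

lemma compl_mem_positroid_inv {π : Equiv.Perm (Fin n)} (hπ : ∀ x, π x ≠ x) {J : Finset (Fin n)}
    (hJ : J ∈ positroid (necklaceOfPerm π)) : Jᶜ ∈ positroid (necklaceOfPerm π⁻¹) := by
  obtain ⟨hcard, hgale⟩ := hJ
  have hcard' (i : Fin n) : #Jᶜ = #(necklaceOfPerm π⁻¹ i) := by
    have := card_necklaceOfPerm_add_card_inv hπ i
    have := hcard i
    rw [card_compl, Fintype.card_fin]
    omega
  refine ⟨hcard', fun i => (finsetLE_iff _ _ _).2 ⟨(hcard' i).symm, fun j => ?_⟩⟩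
  obtain rfl | hij := eq_or_ne i j
  · simp [circInterval]
  have hQ : (circInterval i j)ᶜ = circInterval j i := compl_circInterval hij
  have hJsplit := card_inter_add_card_inter_compl J (circInterval i j)
  have hIsplit := card_inter_add_card_inter_compl (necklaceOfPerm π⁻¹ i) (circInterval i j)
  have hPQ := card_compl_add_card (circInterval i j)
  rw [hQ] at hJsplit hIsplit hPQ
  rw [Fintype.card_fin] at hPQ
  have hJc := card_inter_add_card_compl_inter J (circInterval i j)
  have hgaleQ := ((finsetLE_iff _ _ _).1 (hgale j)).2 i
  have hcentral := card_necklaceOfPerm_inter_add_card_inv_inter hπ i j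
  have := card_necklaceOfPerm_add_card_inv hπ i
  have := hcard i
  omega

lemma compl_mem_positroid_inv_iff {π : Equiv.Perm (Fin n)} (hπ : ∀ x, π x ≠ x)
    (J : Finset (Fin n)) :
    Jᶜ ∈ positroid (necklaceOfPerm π⁻¹) ↔ J ∈ positroid (necklaceOfPerm π) := by
  refine ⟨fun h => ?_, compl_mem_positroid_inv hπ⟩
  have hπ' (x : Fin n) : π⁻¹ x ≠ x := fun h => hπ x (Equiv.Perm.inv_eq_iff_eq.1 h).symm
  simpa using compl_mem_positroid_inv hπ' h

lemma IsConnectedPerm.apply_ne {π : Equiv.Perm (Fin n)} (hn : 2 ≤ n) (hπ : IsConnectedPerm π)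
    (x : Fin n) : π x ≠ x := by
  intro hx
  have hone : (1 : Fin n).val = 1 := by rw [Fin.val_one', Nat.mod_eq_of_lt (by omega)]
  have hx1 : x ≠ x + 1 := left_ne_add.2 fun h => by simp [h] at hone
  have hsingle : circInterval x (x + 1) = {x} := by
    ext y
    simp only [circInterval, mem_filter, mem_univ, true_and, mem_singleton, add_sub_cancel_left,
      hone, Nat.lt_one_iff, Fin.val_eq_zero_iff, sub_eq_zero]
  refine hπ ⟨x, x + 1, hx1, ?_, ?_⟩
  · simp [hsingle, hx]
  · rw [← compl_circInterval hx1, hsingle]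
    ext y
    simp only [mem_image, mem_compl, mem_singleton]
    constructor
    · rintro ⟨a, ha, rfl⟩ h
      exact ha (π.injective (h.trans hx.symm))
    · exact fun hy => ⟨π⁻¹ y, fun h => hy (by rw [← hx, ← h]; simp), by simp⟩

end

theorem exchangeGraph_iso_of_inv_general (n : ℕ) (hn : 3 ≤ n) (π : Equiv.Perm (Fin n))
    (hπ : IsConnectedPerm π) :
    Nonempty (exchangeGraph (necklaceOfPerm π) ≃g exchangeGraph (necklaceOfPerm π⁻¹)) := by
  have : NeZero n := ⟨by omega⟩
  exact ⟨exchangeGraphComplIso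
    (compl_mem_positroid_inv_iff (hπ.apply_ne (by omega)))⟩

theorem exchangeGraph_iso_of_inv (n : ℕ) (hn : 3 ≤ n) (π : Equiv.Perm (Fin n))
    (hπ : IsConnectedPerm π) (hπ' : IsConnectedPerm π⁻¹) :
    Nonempty (exchangeGraph (necklaceOfPerm π) ≃g exchangeGraph (necklaceOfPerm π⁻¹)) :=
  exchangeGraph_iso_of_inv_general n hn π hπ

end WS
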